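/- Let H be a group of permutations of a finite set Ω and let α ∈ Ω. Suppose H has a regular normal subgroup P which is elementary abelian of order p^k, where p is a prime and k ≥ 2. Suppose further that p^k − 1 has a primitive prime divisor r and that r divides |H_α|. Then H acts primitively on Ω. -/

import Mathlib

def stabOf {Ω : Type*} (G : Subgroup (Equiv.Perm Ω)) (α : Ω) : Subgroup (Equiv.Perm Ω) :=
  G ⊓ MulAction.stabilizer (Equiv.Perm Ω) α

def TransOn {Ω : Type*} (H : Subgroup (Equiv.Perm Ω)) (S : Set Ω) : Prop :=
  ∀ x ∈ S, ∀ y ∈ S, ∃ g ∈ H, g x = y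

def IsBlockOn {Ω : Type*} (H : Subgroup (Equiv.Perm Ω)) (S B : Set Ω) : Prop :=
  B ⊆ S ∧ ∀ g ∈ H, (⇑g '' B) = B ∨ Disjoint (⇑g '' B) B

def PrimOn {Ω : Type*} (H : Subgroup (Equiv.Perm Ω)) (S : Set Ω) : Prop :=
  TransOn H S ∧ ∀ B : Set Ω, IsBlockOn H S B → B.Subsingleton ∨ B = S

def NormalIn {W : Type*} [Group W] (N H : Subgroup W) : Prop :=
  N ≤ H ∧ ∀ h ∈ H, ∀ x ∈ N, h * x * h⁻¹ ∈ N

/-! Pick `g ∈ H_α` of order `r`. Since `P` is regular, `x ↦ x α` is a bijection from `P`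
onto `Ω`; as `g` normalises `P` and fixes `α`, it maps `C_P(g)` onto the fixed points of `g`,
and the setwise stabiliser of a block `B ∋ α` in `P` onto `B`. Hence both sets have size `p ^ i`
with `i ≤ k`. Every `g`-orbit has size `1` or `r`, so a `g`-invariant set has as many points as
it has fixed points, modulo `r`; since `p ^ k ≡ 1 [MOD r]` and `r` is a primitive prime divisor,
this forces `i ∈ {0, k}`. For the fixed points, `i = k` would make `g = 1`, so `g` fixes only
`α`; then `|B| ≡ 1 [MOD r]`, so `|B| = 1` or `|B| = p ^ k = |Ω|`. -/

open Equiv Pointwise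

theorem Equiv.Perm.ncard_modEq_ncard_inter_fixedPoints {Ω : Type*} [Finite Ω] {g : Perm Ω}
    {r : ℕ} [Fact r.Prime] (hg : g ^ r = 1) {S : Set Ω} (hS : ∀ x, g x ∈ S ↔ x ∈ S) :
    S.ncard ≡ (S ∩ Function.fixedPoints g).ncard [MOD r] := by
  classical
  have := Fintype.ofFinite Ω
  have hgS : g.subtypePerm hS ^ r ^ 1 = 1 := by
    rw [pow_one, Perm.subtypePerm_pow]
    ext; simp [hg]
  have hsupp : ((g.subtypePerm hS).supportᶜ.map (Function.Embedding.subtype _) : Set Ω) =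
      S ∩ Function.fixedPoints g := by
    ext x
    simp only [Finset.coe_map, Set.mem_image, Finset.mem_coe, Finset.mem_compl, Perm.mem_support,
      not_not, Set.mem_inter_iff, Function.mem_fixedPoints, Function.IsFixedPt,
      Function.Embedding.coe_subtype]
    constructor
    · rintro ⟨y, hy, rfl⟩
      exact ⟨y.2, congrArg Subtype.val hy⟩
    · rintro ⟨hx, hgx⟩
      exact ⟨⟨x, hx⟩, Subtype.ext hgx, rfl⟩
  rw [← hsupp, Set.ncard_coe_finset, Finset.card_map, ← Nat.card_coe_set_eq,
    Nat.card_eq_fintype_card]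
  exact (Perm.card_compl_support_modEq hgS).symm

section Block

variable {Ω : Type*} {H : Subgroup (Perm Ω)} {B : Set Ω}

lemma IsBlockOn.image_eq_of_mem (hB : IsBlockOn H Set.univ B) {g : Perm Ω} (hg : g ∈ H)
    {a : Ω} (ha : a ∈ B) (hga : g a ∈ B) : ⇑g '' B = B :=
  (hB.2 g hg).resolve_right (Set.not_disjoint_iff.mpr ⟨g a, Set.mem_image_of_mem g ha, hga⟩)

lemma IsBlockOn.image (hB : IsBlockOn H Set.univ B) {h : Perm Ω} (hh : h ∈ H) :
    IsBlockOn H Set.univ (⇑h '' B) := by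
  refine ⟨Set.subset_univ _, fun g hg => ?_⟩
  have hconj : ⇑g '' (⇑h '' B) = ⇑h '' (⇑(h⁻¹ * g * h) '' B) := by
    simp only [Set.image_image, Perm.mul_apply, Perm.coe_inv, apply_symm_apply]
  rw [hconj]
  rcases hB.2 _ (mul_mem (mul_mem (inv_mem hh) hg) hh) with heq | hdisj
  · exact Or.inl (by rw [heq])
  · exact Or.inr ((Set.disjoint_image_iff h.injective).mpr hdisj)

end Block

section Regular

variable {Ω : Type*} {P : Subgroup (Perm Ω)} {α : Ω}

lemma injOn_apply_of_stabOf_eq_bot (hfree : stabOf P α = ⊥) :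
    Set.InjOn (fun x : Perm Ω => x α) P := by
  intro x hx y hy hxy
  have hyx : y⁻¹ * x ∈ stabOf P α := Subgroup.mem_inf.mpr
    ⟨mul_mem (inv_mem hy) hx, by
      rw [MulAction.mem_stabilizer_iff, Perm.smul_def, Perm.mul_apply, Perm.inv_eq_iff_eq]
      exact hxy⟩
  rw [hfree, Subgroup.mem_bot, inv_mul_eq_one] at hyx
  exact hyx.symm

lemma ncard_image_apply_eq_pow_of_le {p k : ℕ} (hp : p.Prime) (hfree : stabOf P α = ⊥)
    (hPcard : Nat.card P = p ^ k) {Q : Subgroup (Perm Ω)} (hQP : Q ≤ P) :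
    ∃ i ≤ k, ((fun x : Perm Ω => x α) '' Q).ncard = p ^ i := by
  rw [((injOn_apply_of_stabOf_eq_bot hfree).mono hQP).ncard_image,
    ← Nat.card_coe_set_eq]
  exact (Nat.dvd_prime_pow hp).mp (hPcard ▸ Subgroup.card_dvd_of_le hQP)

lemma image_apply_eq_univ (htrans : TransOn P Set.univ) :
    (fun x : Perm Ω => x α) '' P = Set.univ :=
  Set.eq_univ_of_forall fun β => htrans α trivial β trivial

lemma image_apply_centralizer {H : Subgroup (Perm Ω)} (hPH : NormalIn P H)
    (htrans : TransOn P Set.univ) (hfree : stabOf P α = ⊥) {g : Perm Ω} (hgH : g ∈ H)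
    (hgα : g α = α) :
    (fun x : Perm Ω => x α) '' (P ⊓ Subgroup.centralizer {g} : Subgroup (Perm Ω)) =
      Function.fixedPoints g := by
  ext β
  constructor
  · rintro ⟨x, hx, rfl⟩
    have hxg := (Subgroup.mem_inf.mp hx).2
    show g (x α) = x α
    rw [← Perm.mul_apply, ← Subgroup.mem_centralizer_singleton_iff.mp hxg, Perm.mul_apply, hgα]
  · intro hβ
    obtain ⟨x, hxP, rfl⟩ := htrans α trivial β trivial
    have hconj : g * x * g⁻¹ = x := by
      refine injOn_apply_of_stabOf_eq_bot hfree (hPH.2 g hgH x hxP) hxP ?_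
      have hα : g⁻¹ α = α := by rw [Perm.inv_eq_iff_eq, hgα]
      simp only [Perm.mul_apply, hα]
      exact hβ
    rw [mul_inv_eq_iff_eq_mul] at hconj
    exact ⟨x, Subgroup.mem_inf.mpr
      ⟨hxP, Subgroup.mem_centralizer_singleton_iff.mpr hconj.symm⟩, rfl⟩

lemma image_apply_stabilizer_block {H : Subgroup (Perm Ω)} (hPH : P ≤ H)
    (htrans : TransOn P Set.univ) {B : Set Ω} (hB : IsBlockOn H Set.univ B) (hαB : α ∈ B) :
    (fun x : Perm Ω => x α) '' (P ⊓ MulAction.stabilizer (Perm Ω) B : Subgroup (Perm Ω)) =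
      B := by
  ext β
  constructor
  · rintro ⟨x, hx, rfl⟩
    have hxB := MulAction.mem_stabilizer_iff.mp (Subgroup.mem_inf.mp hx).2
    exact hxB ▸ Set.mem_image_of_mem x hαB
  · intro hβ
    obtain ⟨x, hxP, rfl⟩ := htrans α trivial β trivial
    exact ⟨x, Subgroup.mem_inf.mpr ⟨hxP, hB.image_eq_of_mem (hPH hxP) hαB hβ⟩, rfl⟩

end Regular

lemma eq_zero_or_eq_of_pow_modEq_one {p k r j : ℕ} (hp : 0 < p)
    (hppd : ∀ i : ℕ, 0 < i → i < k → ¬ r ∣ p ^ i - 1) (hjk : j ≤ k)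
    (hj : p ^ j ≡ 1 [MOD r]) :
    j = 0 ∨ j = k := by
  by_contra! hne
  exact hppd j (Nat.pos_of_ne_zero hne.1) (hjk.lt_of_ne hne.2)
    ((Nat.modEq_iff_dvd' (Nat.one_le_pow _ _ hp)).mp hj.symm)

lemma ncard_univ_eq_pow {Ω : Type*} {P : Subgroup (Perm Ω)} {α : Ω} {p k : ℕ}
    (hPtrans : TransOn P Set.univ) (hfree : stabOf P α = ⊥) (hPcard : Nat.card P = p ^ k) :
    (Set.univ : Set Ω).ncard = p ^ k := by
  rw [← image_apply_eq_univ hPtrans, (injOn_apply_of_stabOf_eq_bot hfree).ncard_image,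
    ← Nat.card_coe_set_eq]
  exact hPcard

lemma fixedPoints_eq_singleton {Ω : Type*} [Finite Ω] {H P : Subgroup (Perm Ω)} {α : Ω}
    {p k r : ℕ} (hp : p.Prime) (hPH : NormalIn P H) (hPtrans : TransOn P Set.univ)
    (hfree : stabOf P α = ⊥) (hPcard : Nat.card P = p ^ k) [Fact r.Prime]
    (hrdvd : r ∣ p ^ k - 1) (hppd : ∀ i : ℕ, 0 < i → i < k → ¬ r ∣ p ^ i - 1)
    {g : Perm Ω} (hgH : g ∈ H) (hgα : g α = α) (hg : orderOf g = r) :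
    Function.fixedPoints g = {α} := by
  obtain ⟨m, hmk, hm⟩ := ncard_image_apply_eq_pow_of_le hp hfree hPcard
    (inf_le_left : P ⊓ Subgroup.centralizer {g} ≤ P)
  rw [image_apply_centralizer hPH hPtrans hfree hgH hgα] at hm
  have hΩ := ncard_univ_eq_pow hPtrans hfree hPcard
  have hpk : p ^ k ≡ 1 [MOD r] :=
    ((Nat.modEq_iff_dvd' (Nat.one_le_pow _ _ hp.pos)).mpr hrdvd).symm
  have hcong := Perm.ncard_modEq_ncard_inter_fixedPoints (hg ▸ pow_orderOf_eq_one g)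
    (S := Set.univ) (fun _ => Iff.rfl)
  rw [Set.univ_inter, hΩ, hm] at hcong
  rcases eq_zero_or_eq_of_pow_modEq_one hp.pos hppd hmk (hcong.symm.trans hpk) with rfl | rfl
  · exact (Set.ncard_le_one_iff_subsingleton.mp (hm.trans (pow_zero p)).le).eq_singleton_of_mem
      hgα
  · have hF : Function.fixedPoints g = Set.univ :=
      Set.eq_of_subset_of_ncard_le (Set.subset_univ _) (by rw [hΩ, hm])
    have hg1 : g = 1 :=
      Perm.ext fun x => (hF.symm ▸ Set.mem_univ x : x ∈ Function.fixedPoints g)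
    rw [hg1, orderOf_one] at hg
    exact absurd hg (Fact.out : r.Prime).one_lt.ne

lemma IsBlockOn.subsingleton_or_eq_univ_of_mem {Ω : Type*} [Finite Ω] {H P : Subgroup (Perm Ω)}
    {α : Ω} {p k r : ℕ} (hp : p.Prime) (hPH : NormalIn P H) (hPtrans : TransOn P Set.univ)
    (hfree : stabOf P α = ⊥) (hPcard : Nat.card P = p ^ k) (hr : r.Prime)
    (hrdvd : r ∣ p ^ k - 1) (hppd : ∀ i : ℕ, 0 < i → i < k → ¬ r ∣ p ^ i - 1)
    (hrstab : r ∣ Nat.card (stabOf H α)) {B : Set Ω} (hB : IsBlockOn H Set.univ B)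
    (hαB : α ∈ B) :
    B.Subsingleton ∨ B = Set.univ := by
  have := Fact.mk hr
  obtain ⟨⟨g, hg⟩, hgr⟩ := exists_prime_orderOf_dvd_card' r hrstab
  obtain ⟨hgH, hgα⟩ := Subgroup.mem_inf.mp hg
  rw [MulAction.mem_stabilizer_iff, Perm.smul_def] at hgα
  rw [Subgroup.orderOf_mk] at hgr
  have hgB : ∀ x, g x ∈ B ↔ x ∈ B := fun x => by
    nth_rw 1 [← hB.image_eq_of_mem hgH hαB (by rwa [hgα])]
    exact g.injective.mem_set_image
  obtain ⟨i, hik, hi⟩ := ncard_image_apply_eq_pow_of_le hp hfree hPcard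
    (inf_le_left : P ⊓ MulAction.stabilizer (Perm Ω) B ≤ P)
  rw [image_apply_stabilizer_block hPH.1 hPtrans hB hαB] at hi
  have hcong := Perm.ncard_modEq_ncard_inter_fixedPoints (hgr ▸ pow_orderOf_eq_one g) hgB
  rw [fixedPoints_eq_singleton hp hPH hPtrans hfree hPcard hrdvd hppd hgH hgα hgr,
    Set.inter_singleton_of_mem hαB, Set.ncard_singleton, hi] at hcong
  rcases eq_zero_or_eq_of_pow_modEq_one hp.pos hppd hik hcong with rfl | rfl
  · exact Or.inl (Set.ncard_le_one_iff_subsingleton.mp (hi.trans (pow_zero p)).le)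
  · exact Or.inr (Set.eq_of_subset_of_ncard_le (Set.subset_univ _)
      (by rw [ncard_univ_eq_pow hPtrans hfree hPcard, hi]))

theorem stmt_6_general {Ω : Type*} [Finite Ω] (H P : Subgroup (Equiv.Perm Ω)) (α : Ω)
    (p k r : ℕ) (hp : p.Prime)
    (hPH : NormalIn P H)
    (hPtrans : TransOn P Set.univ) (hPfree : ∀ x : Ω, stabOf P x = ⊥)
    (hPcard : Nat.card ↥P = p ^ k)
    (hr : r.Prime) (hrdvd : r ∣ p ^ k - 1)
    (hppd : ∀ i : ℕ, 0 < i → i < k → ¬ r ∣ p ^ i - 1)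
    (hrstab : r ∣ Nat.card ↥(stabOf H α)) :
    PrimOn H Set.univ := by
  refine ⟨fun x _ y _ => ?_, fun B hB => ?_⟩
  · obtain ⟨g, hg, hgx⟩ := hPtrans x trivial y trivial
    exact ⟨g, hPH.1 hg, hgx⟩
  rcases B.eq_empty_or_nonempty with rfl | ⟨β, hβ⟩
  · exact Or.inl Set.subsingleton_empty
  obtain ⟨h, hhP, hhβ⟩ := hPtrans β trivial α trivial
  rcases (hB.image (hPH.1 hhP)).subsingleton_or_eq_univ_of_mem hp hPH hPtrans (hPfree α) hPcard
      hr hrdvd hppd hrstab ⟨β, hβ, hhβ⟩ with hsub | huniv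
  · exact Or.inl (h.injective.subsingleton_image_iff.mp hsub)
  · exact Or.inr (Set.image_injective.mpr h.injective
      (huniv.trans (Set.image_univ_of_surjective h.surjective).symm))

/-- **Lemma 3.1 (tech-4).** Let `H` be a permutation group on a finite set `Ω` and `α ∈ Ω`.
Suppose `H` has a regular normal subgroup `P ≅ Z_p^k` with `k ≥ 2` and `p` a prime.
If `p^k − 1` has a primitive prime divisor `r` and `r` divides `|H_α|`, then `H` is
primitive on `Ω`. -/
theorem stmt_6 {Ω : Type*} [Finite Ω] (H P : Subgroup (Equiv.Perm Ω)) (α : Ω)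
    (p k r : ℕ) (hp : p.Prime) (hk : 2 ≤ k)
    (hPH : NormalIn P H)
    (hPtrans : TransOn P Set.univ) (hPfree : ∀ x : Ω, stabOf P x = ⊥)
    (hPcard : Nat.card ↥P = p ^ k)
    (hPelem : ∀ g ∈ P, g ^ p = 1)
    (hPab : ∀ g ∈ P, ∀ h ∈ P, g * h = h * g)
    (hr : r.Prime) (hrdvd : r ∣ p ^ k - 1)
    (hppd : ∀ i : ℕ, 0 < i → i < k → ¬ r ∣ p ^ i - 1)
    (hrstab : r ∣ Nat.card ↥(stabOf H α)) :
    PrimOn H Set.univ :=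
  stmt_6_general H P α p k r hp hPH hPtrans hPfree hPcard hr hrdvd hppd hrstab
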